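/- arXiv:1902.09617 — 4 statements merged into one kernel-verified Lean document; each statement's English description precedes it below -/
import Mathlib

section
/- A nilpotent subgroup of the symmetric group Sym(n) has order at most 2^(n-1) for all n ≥ 1. -/
open Equiv Subgroup

private lemma center_witness_aux {G : Type*} [Group G] [Nontrivial G]
    (h : Group.IsNilpotent G) : ∃ g : G, g ∈ Subgroup.center G ∧ g ≠ 1 := by
  by_contra hc
  push_neg at hc
  have hbot : Subgroup.center G = ⊥ := by
    rw [eq_bot_iff]
    intro x hx
    rw [Subgroup.mem_bot]
    exact hc x hx
  have hall : ∀ k, Subgroup.upperCentralSeries G k = ⊥ := by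
    intro k
    induction k with
    | zero => exact Subgroup.upperCentralSeries_zero G
    | succ k ihk =>
      rw [eq_bot_iff]
      intro x hx
      rw [Subgroup.mem_upperCentralSeries_succ_iff] at hx
      have hxc : x ∈ Subgroup.center G := by
        rw [Subgroup.mem_center_iff]
        intro y
        have h1 := hx y
        rw [ihk, Subgroup.mem_bot, commutatorElement_def, mul_inv_eq_one] at h1
        calc y * x = (x * y * x⁻¹) * x := by rw [h1]
          _ = x * y := by group
      rw [hbot] at hxc
      exact hxc
  obtain ⟨k, hk⟩ := h.nilpotent'
  rw [hall k] at hk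
  obtain ⟨x, y, hxy⟩ := exists_pair_ne G
  have hone : ∀ g : G, g = 1 := by
    intro g
    have : g ∈ (⊥ : Subgroup G) := by rw [hk]; exact Subgroup.mem_top g
    rwa [Subgroup.mem_bot] at this
  exact hxy ((hone x).trans (hone y).symm)

private lemma dixon_aux (n : ℕ) : ∀ (α : Type) (_ : Fintype α) (_ : DecidableEq α),
    Fintype.card α = n → ∀ Y : Subgroup (Equiv.Perm α), Group.IsNilpotent Y →
    Nat.card Y ≤ 2 ^ (n - 1) := by
  induction n using Nat.strong_induction_on with
  | _ n ih =>
  intro α _ _ hcard Y hY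
  rcases subsingleton_or_nontrivial Y with hs | hs
  · haveI : Unique Y := uniqueOfSubsingleton 1
    rw [Nat.card_unique]
    exact Nat.one_le_two_pow
  -- Y is nontrivial, so α is nonempty
  have hne : Nonempty α := by
    rcases isEmpty_or_nonempty α with he | he
    · haveI : Subsingleton (Equiv.Perm α) := ⟨fun a b => Equiv.ext fun x => isEmptyElim x⟩
      haveI : Subsingleton Y := ⟨fun a b => Subtype.ext (Subsingleton.elim _ _)⟩
      exact absurd hs (not_nontrivial Y)
    · exact he
  have hn1 : 1 ≤ n := by
    rw [← hcard]
    exact Fintype.card_pos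
  obtain ⟨g, hgc, hg1⟩ := center_witness_aux hY
  set gp : Equiv.Perm α := (g : Equiv.Perm α) with hgp
  have hgp1 : gp ≠ 1 := fun h => hg1 (Subtype.ext h)
  have hcomm : ∀ y : Y, (y : Equiv.Perm α) * gp = gp * (y : Equiv.Perm α) := by
    intro y
    have h0 := Subgroup.mem_center_iff.mp hgc y
    have h1 := congrArg Subtype.val h0
    simpa using h1
  have hcommz : ∀ (y : Y) (i : ℤ) (a : α),
      (y : Equiv.Perm α) ((gp ^ i) a) = (gp ^ i) ((y : Equiv.Perm α) a) := by
    intro y i a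
    have h2 : (y : Equiv.Perm α) * gp ^ i = gp ^ i * (y : Equiv.Perm α) :=
      (Commute.zpow_right (hcomm y) i)
    calc (y : Equiv.Perm α) ((gp ^ i) a) = ((y : Equiv.Perm α) * gp ^ i) a := rfl
      _ = (gp ^ i * (y : Equiv.Perm α)) a := by rw [h2]
      _ = (gp ^ i) ((y : Equiv.Perm α) a) := rfl
  -- the same-cycle setoid
  let sc : Setoid α := ⟨gp.SameCycle, Equiv.Perm.SameCycle.equivalence gp⟩
  haveI hdec : DecidableRel sc.r := fun a b =>
    (inferInstance : Decidable (gp.SameCycle a b))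
  haveI : DecidableEq (Quotient sc) := @Quotient.decidableEq α sc hdec
  haveI : Fintype (Quotient sc) := @Quotient.fintype α _ sc hdec
  set m : ℕ := Fintype.card (Quotient sc) with hm
  -- an element moved by gp
  obtain ⟨a₀, ha₀⟩ : ∃ a, gp a ≠ a := by
    by_contra hfa
    push_neg at hfa
    exact hgp1 (Equiv.ext hfa)
  have hmk_surj : Function.Surjective (Quotient.mk sc) := Quotient.mk_surjective
  have hmlt : m < n := by
    rw [← hcard]
    apply Fintype.card_lt_of_surjective_not_injective _ hmk_surj
    intro hinj
    have : gp.SameCycle a₀ (gp a₀) := ⟨1, by simp⟩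
    have := hinj (Quotient.sound this)
    exact ha₀ this.symm
  have hm1 : 1 ≤ m := by
    haveI : Nonempty (Quotient sc) := hne.map (Quotient.mk sc)
    rw [hm]
    exact Fintype.card_pos
  rcases eq_or_lt_of_le hm1 with hm1' | hm2
  · -- m = 1 : all of α in one cycle of gp; Y embeds into α
    haveI : Subsingleton (Quotient sc) :=
      Fintype.card_le_one_iff_subsingleton.mp (by rw [← hm]; omega)
    have hall : ∀ b : α, gp.SameCycle a₀ b := fun b =>
      Quotient.exact (Subsingleton.elim (Quotient.mk sc a₀) (Quotient.mk sc b))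
    have hinj : Function.Injective (fun y : Y => (y : Equiv.Perm α) a₀) := by
      intro y z hyz
      simp only at hyz
      apply Subtype.ext
      apply Equiv.ext
      intro b
      obtain ⟨i, hi⟩ := hall b
      rw [← hi, hcommz y i a₀, hcommz z i a₀, hyz]
    have h1 : Nat.card Y ≤ Nat.card α := Nat.card_le_card_of_injective _ hinj
    have h2 : Nat.card α = n := by rw [Nat.card_eq_fintype_card, hcard]
    have h3 : n ≤ 2 ^ (n - 1) := by
      have := Nat.lt_two_pow_self (n := n - 1)
      omega
    omega
  · -- 2 ≤ m : block decomposition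
    have hpres : ∀ (y : Y) (a b : α), gp.SameCycle a b ↔
        gp.SameCycle ((y : Equiv.Perm α) a) ((y : Equiv.Perm α) b) := by
      intro y a b
      constructor
      · rintro ⟨i, hi⟩
        exact ⟨i, by rw [← hcommz y i a, hi]⟩
      · rintro ⟨i, hi⟩
        refine ⟨i, ?_⟩
        rw [← hcommz y i a] at hi
        exact (y : Equiv.Perm α).injective hi
    let ρ : Y →* Equiv.Perm (Quotient sc) :=
      { toFun := fun y => Quotient.congr (y : Equiv.Perm α) (hpres y)
        map_one' := by
          apply Equiv.ext
          intro q
          induction q using Quotient.ind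
          rfl
        map_mul' := by
          intro y z
          apply Equiv.ext
          intro q
          induction q using Quotient.ind
          rfl }
    have hρ_apply : ∀ (y : Y) (a : α),
        ρ y (Quotient.mk sc a) = Quotient.mk sc ((y : Equiv.Perm α) a) := fun y a => rfl
    -- range of ρ is nilpotent of degree m
    haveI : Group.IsNilpotent Y := hY
    have hrange_nilp : Group.IsNilpotent ρ.range :=
      nilpotent_of_surjective ρ.rangeRestrict ρ.rangeRestrict_surjective
    have hrange : Nat.card ρ.range ≤ 2 ^ (m - 1) :=
      ih m hmlt (Quotient sc) inferInstance inferInstance hm.symm ρ.range hrange_nilp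
    -- kernel bound
    set K := ρ.ker with hK
    have hker_same : ∀ y : K, ∀ a : α,
        Quotient.mk sc (((y : Y) : Equiv.Perm α) a) = Quotient.mk sc a := by
      intro y a
      have h1 : ρ (y : Y) = 1 := y.2
      have := hρ_apply (y : Y) a
      rw [h1] at this
      exact this.symm
    -- for each q, restriction to the fiber
    have hfib : ∀ (y : K) (q : Quotient sc) (a : α),
        Quotient.mk sc a = q ↔ Quotient.mk sc (((y : Y) : Equiv.Perm α) a) = q := by
      intro y q a
      rw [hker_same y a]
    let σ : ∀ q : Quotient sc, K →* Equiv.Perm {a : α // Quotient.mk sc a = q} :=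
      fun q =>
      { toFun := fun y => Equiv.Perm.subtypePerm ((y : Y) : Equiv.Perm α) (fun a => (hfib y q a).symm)
        map_one' := by
          apply Equiv.ext
          intro b
          apply Subtype.ext
          rfl
        map_mul' := by
          intro y z
          apply Equiv.ext
          intro b
          apply Subtype.ext
          rfl }
    set d : Quotient sc → ℕ := fun q => Fintype.card {a : α // Quotient.mk sc a = q} with hd
    let τ : K → ∀ q : Quotient sc, (σ q).range :=
      fun y q => ⟨(σ q) y, MonoidHom.mem_range.mpr ⟨y, rfl⟩⟩
    have hτinj : Function.Injective τ := by
      intro y z h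
      have h' : ∀ q : Quotient sc, (σ q) y = (σ q) z := by
        intro q
        have := congrFun h q
        exact Subtype.ext_iff.mp this
      apply Subtype.ext
      apply Subtype.ext
      apply Equiv.ext
      intro a
      have h2 := congrFun (congrArg (fun (e : Equiv.Perm _) => (e : _ → _))
        (h' (Quotient.mk sc a))) ⟨a, rfl⟩
      exact congrArg Subtype.val h2
    have hcardK : Nat.card K ≤ ∏ q : Quotient sc, Nat.card ((σ q).range) := by
      calc Nat.card K ≤ Nat.card (∀ q : Quotient sc, (σ q).range) :=
            Nat.card_le_card_of_injective τ hτinj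
        _ = ∏ q : Quotient sc, Nat.card ((σ q).range) := Nat.card_pi
    have hfbound : ∀ q : Quotient sc, Nat.card ((σ q).range) ≤ 2 ^ (d q - 1) := by
      intro q
      have hlt : d q < n := by
        rw [← hcard, hd]
        haveI : Nontrivial (Quotient sc) := by
          rw [← Fintype.one_lt_card_iff_nontrivial, ← hm]
          exact hm2
        obtain ⟨q', hq'⟩ := exists_ne q
        obtain ⟨b, hb⟩ := hmk_surj q'
        exact Fintype.card_subtype_lt (x := b) (by rw [hb]; exact hq')
      exact ih (d q) hlt _ inferInstance inferInstance rfl ((σ q).range)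
        (nilpotent_of_surjective (σ q).rangeRestrict (σ q).rangeRestrict_surjective)
    have hd1 : ∀ q : Quotient sc, 1 ≤ d q := by
      intro q
      obtain ⟨b, hb⟩ := hmk_surj q
      haveI : Nonempty {a : α // Quotient.mk sc a = q} := ⟨⟨b, hb⟩⟩
      exact Fintype.card_pos
    have hsum : ∑ q : Quotient sc, d q = n := by
      rw [← hcard, hd, ← Fintype.card_sigma]
      exact Fintype.card_congr (Equiv.sigmaFiberEquiv (Quotient.mk sc))
    have hsum' : ∑ q : Quotient sc, (d q - 1) = n - m := by
      have h1 : ∑ q : Quotient sc, ((d q - 1) + 1) = ∑ q : Quotient sc, d q :=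
        Finset.sum_congr rfl fun q _ => by have := hd1 q; omega
      rw [Finset.sum_add_distrib, Finset.sum_const, Finset.card_univ, smul_eq_mul, mul_one,
        hsum] at h1
      have hmcard : Fintype.card (Quotient sc) = m := hm.symm
      omega
    have hkerbound : Nat.card K ≤ 2 ^ (n - m) := by
      calc Nat.card K ≤ ∏ q : Quotient sc, Nat.card ((σ q).range) := hcardK
        _ ≤ ∏ q : Quotient sc, 2 ^ (d q - 1) :=
            Finset.prod_le_prod' fun q _ => hfbound q
        _ = 2 ^ (∑ q : Quotient sc, (d q - 1)) :=
            Finset.prod_pow_eq_pow_sum Finset.univ _ 2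
        _ = 2 ^ (n - m) := by rw [hsum']
    have hsplit : Nat.card Y = Nat.card (Y ⧸ K) * Nat.card K :=
      Subgroup.card_eq_card_quotient_mul_card_subgroup K
    have hqr : Nat.card (Y ⧸ K) = Nat.card ρ.range :=
      Nat.card_congr (QuotientGroup.quotientKerEquivRange ρ).toEquiv
    calc Nat.card Y = Nat.card (Y ⧸ K) * Nat.card K := hsplit
      _ ≤ 2 ^ (m - 1) * 2 ^ (n - m) := Nat.mul_le_mul (hqr ▸ hrange) hkerbound
      _ = 2 ^ (n - 1) := by
          rw [← pow_add]
          congr 1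
          omega

theorem nilpotent_subgroup_of_symmetric_group_card_le (n : ℕ) (hn : 1 ≤ n)
    (Y : Subgroup (Equiv.Perm (Fin n))) (hY : Group.IsNilpotent Y) :
    Nat.card Y ≤ 2 ^ (n - 1) := by
  exact dixon_aux n (Fin n) inferInstance inferInstance (Fintype.card_fin n) Y hY
end

section
/- Every nilpotent subgroup of the alternating group Alt(5) has order at most 5, and hence its square is less than |Alt(5)| = 60. -/
/-!
A finite nilpotent group is the direct product of its Sylow subgroups, so if two distinct primes
`p`, `q` divide its order it contains commuting elements of orders `p` and `q`, hence an element
of order `p * q ≥ 6`. Every element of `Alt(5)` has order `1`, `2`, `3` or `5`, so a nilpotent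
subgroup of `Alt(5)` has prime-power order dividing `60`, i.e. order at most `5`.
-/

theorem Group.exists_orderOf_eq_mul_of_isNilpotent {G : Type*} [Group G] [Finite G]
    [Group.IsNilpotent G] {p q : ℕ} [Fact p.Prime] [Fact q.Prime] (hpq : p ≠ q)
    (hp : p ∣ Nat.card G) (hq : q ∣ Nat.card G) : ∃ g : G, orderOf g = p * q := by
  obtain ⟨P⟩ : Nonempty (Sylow p G) := inferInstance
  obtain ⟨Q⟩ : Nonempty (Sylow q G) := inferInstance
  obtain ⟨x, hx⟩ := exists_prime_orderOf_dvd_card' p (P.dvd_card_of_dvd_card hp)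
  obtain ⟨y, hy⟩ := exists_prime_orderOf_dvd_card' q (Q.dvd_card_of_dvd_card hq)
  rw [← Subgroup.orderOf_coe] at hx hy
  have hxy : Commute (x : G) y :=
    Subgroup.commute_of_normal_of_disjoint _ _ inferInstance inferInstance
      (IsPGroup.disjoint_of_ne p q hpq _ _ P.isPGroup' Q.isPGroup') _ _ x.2 y.2
  have hcop : (orderOf (x : G)).Coprime (orderOf (y : G)) := by
    rw [hx, hy]
    exact (Nat.coprime_primes Fact.out Fact.out).mpr hpq
  exact ⟨x * y, by rw [hxy.orderOf_mul_eq_mul_orderOf_of_coprime hcop, hx, hy]⟩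

theorem Nat.Prime.six_le_mul_of_ne {p q : ℕ} (hp : p.Prime) (hq : q.Prime) (hpq : p ≠ q) :
    6 ≤ p * q := by
  have := hp.two_le
  have := hq.two_le
  rcases hpq.lt_or_gt with h | h <;> nlinarith

set_option maxRecDepth 20000 in
theorem pow_eq_one_of_sign_eq_one_fin_five :
    ∀ σ : Equiv.Perm (Fin 5), σ.sign = 1 → σ ^ 2 = 1 ∨ σ ^ 3 = 1 ∨ σ ^ 5 = 1 := by
  decide

theorem orderOf_le_five_of_mem_alternatingGroup_fin_five {σ : Equiv.Perm (Fin 5)}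
    (hσ : σ ∈ alternatingGroup (Fin 5)) : orderOf σ ≤ 5 := by
  rcases pow_eq_one_of_sign_eq_one_fin_five σ hσ with h | h | h <;>
    linarith [orderOf_le_of_pow_eq_one (by norm_num) h]

theorem exists_prime_ne_dvd_of_dvd_sixty : ∀ n ∈ Nat.divisors 60, 6 ≤ n →
    ∃ p ∈ Finset.range 6, ∃ q ∈ Finset.range 6, p.Prime ∧ q.Prime ∧ p ≠ q ∧ p ∣ n ∧ q ∣ n := by
  decide

theorem nilpotent_subgroup_of_alt5 (Y : Subgroup (Equiv.Perm (Fin 5)))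
    (hYA : Y ≤ alternatingGroup (Fin 5)) (hY : Group.IsNilpotent Y) :
    Nat.card Y ≤ 5 ∧ Nat.card Y ^ 2 < 60 := by
  have hdvd : Nat.card Y ∣ 60 := by
    have := Subgroup.card_dvd_of_le hYA
    rwa [nat_card_alternatingGroup, Nat.card_fin] at this
  suffices h5 : Nat.card Y ≤ 5 from ⟨h5, by nlinarith⟩
  by_contra! h6
  obtain ⟨p, -, q, -, hp, hq, hpq, hpY, hqY⟩ :=
    exists_prime_ne_dvd_of_dvd_sixty _ (Nat.mem_divisors.mpr ⟨hdvd, by norm_num⟩) h6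
  have : Fact p.Prime := ⟨hp⟩
  have : Fact q.Prime := ⟨hq⟩
  obtain ⟨g, hg⟩ := Group.exists_orderOf_eq_mul_of_isNilpotent hpq hpY hqY
  have h5 := orderOf_le_five_of_mem_alternatingGroup_fin_five (hYA g.2)
  rw [Subgroup.orderOf_coe, hg] at h5
  linarith [hp.six_le_mul_of_ne hq hpq]
end

section
/- Let E be a central product of X₁, …, X_n amalgamating a central subgroup Z, λ ∈ Irr(Z), and K = K₁⋯K_n a subgroup with Z ≤ K_i ≤ X_i. For γ_i ∈ Irr(K_i | λ), the induced character satisfies (γ₁·…·γ_n)^E = (γ₁)^{X₁}·…·(γ_n)^{X_n}. -/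
open scoped BigOperators

lemma listOfFn_prod_eq_single {M : Type*} [Monoid M] :
    ∀ {n : ℕ} (f : Fin n → M) (i : Fin n), (∀ j, j ≠ i → f j = 1) →
      (List.ofFn f).prod = f i := by
  intro n
  induction n with
  | zero => exact fun f i _ => i.elim0
  | succ m ih =>
    intro f i hf
    rw [List.ofFn_succ, List.prod_cons]
    rcases Fin.eq_zero_or_eq_succ i with hi | ⟨j, rfl⟩
    · subst hi
      have h1 : (List.ofFn (fun k : Fin m => f k.succ)).prod = 1 := by
        apply List.prod_eq_one
        intro x hx
        rw [List.mem_ofFn] at hx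
        obtain ⟨k, rfl⟩ := hx
        exact hf _ (Fin.succ_ne_zero k)
      rw [h1, mul_one]
    · rw [hf 0 (Fin.succ_ne_zero j).symm, one_mul]
      exact ih _ j fun k hk => hf k.succ (by simpa using hk)

lemma listOfFn_prod_mul {M : Type*} [Monoid M] :
    ∀ {n : ℕ} (a b : Fin n → M), (∀ i j, i ≠ j → Commute (a i) (b j)) →
      (List.ofFn (fun i => a i * b i)).prod = (List.ofFn a).prod * (List.ofFn b).prod := by
  intro n
  induction n with
  | zero => simp
  | succ m ih =>
    intro a b h
    rw [List.ofFn_succ, List.ofFn_succ, List.ofFn_succ, List.prod_cons, List.prod_cons,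
      List.prod_cons]
    rw [ih (fun i => a i.succ) (fun i => b i.succ)
      (fun i j hij => h i.succ j.succ (by simpa using hij))]
    have hc : Commute (b 0) ((List.ofFn fun i : Fin m => a i.succ)).prod := by
      apply Commute.list_prod_right
      intro x hx
      rw [List.mem_ofFn] at hx
      obtain ⟨k, rfl⟩ := hx
      exact (h k.succ 0 (Fin.succ_ne_zero k)).symm
    simp only [← mul_assoc]
    rw [mul_assoc (a 0), hc.eq, ← mul_assoc]

def piProdHom {E : Type*} [Group E] {n : ℕ} (X : Fin n → Subgroup E)
    (hcomm : ∀ i j, i ≠ j → ∀ a ∈ X i, ∀ b ∈ X j, Commute a b) :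
    ((i : Fin n) → X i) →* E where
  toFun a := (List.ofFn fun i => (a i : E)).prod
  map_one' := by simp
  map_mul' a b := by
    simpa using listOfFn_prod_mul (fun i => ((a i : X i) : E)) (fun i => ((b i : X i) : E))
      (fun i j hij => hcomm i j hij _ (a i).2 _ (b j).2)

lemma piProdHom_single {E : Type*} [Group E] {n : ℕ} (X : Fin n → Subgroup E)
    (hcomm : ∀ i j, i ≠ j → ∀ a ∈ X i, ∀ b ∈ X j, Commute a b) (i : Fin n) (u : E)
    (hu : u ∈ X i) :
    piProdHom X hcomm (fun j => if h : i = j then ⟨u, h ▸ hu⟩ else 1) = u := by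
  classical
  have := listOfFn_prod_eq_single
    (fun j => (((if h : i = j then (⟨u, h ▸ hu⟩ : X j) else 1) : X j) : E)) i
    (fun j hj => by simp [dif_neg (Ne.symm hj)])
  rw [dif_pos rfl] at this
  exact this

lemma sum_comp_eq_card_ker_mul {G H : Type*} [Group G] [Group H] [Fintype G] [Fintype H]
    (f : G →* H) (hf : Function.Surjective f) (T : H → ℂ) :
    ∑ y : G, T (f y) = (Nat.card f.ker : ℂ) * ∑ w : H, T w := by
  classical
  rw [← Fintype.sum_fiberwise f (fun y => T (f y)), Finset.mul_sum]
  apply Finset.sum_congr rfl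
  intro w _
  obtain ⟨y₀, rfl⟩ := hf w
  have h1 : ∀ (p : {y // f y = f y₀}), T (f p.1) = T (f y₀) := fun p => by rw [p.2]
  rw [Fintype.sum_congr _ _ h1, Finset.sum_const]
  have e : f.ker ≃ {y // f y = f y₀} :=
    { toFun := fun k => ⟨y₀ * k, by
        have hk : f (k : G) = 1 := k.2
        simp [hk]⟩
      invFun := fun p => ⟨y₀⁻¹ * p, by
        have hp : f (p : G) = f y₀ := p.2
        simp [MonoidHom.mem_ker, hp]⟩
      left_inv := fun k => by ext; simp
      right_inv := fun p => by ext; simp }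
  have : Fintype.card {y // f y = f y₀} = Nat.card f.ker := by
    rw [← Nat.card_eq_fintype_card, Nat.card_congr e]
  rw [Finset.card_univ, this, nsmul_eq_mul]

lemma piProdHom_mem {E : Type*} [Group E] {n : ℕ} (X : Fin n → Subgroup E)
    (hcomm : ∀ i j, i ≠ j → ∀ a ∈ X i, ∀ b ∈ X j, Commute a b) (S : Subgroup E)
    (c : (i : Fin n) → X i) (h : ∀ i, ((c i : X i) : E) ∈ S) :
    piProdHom X hcomm c ∈ S := by
  show (List.ofFn fun i => ((c i : X i) : E)).prod ∈ S
  apply Subgroup.list_prod_mem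
  intro e he
  rw [List.mem_ofFn] at he
  obtain ⟨j, rfl⟩ := he
  exact h j


open scoped Classical in
/-- The induced class function: for `γ` a function on subgroup `H` of `G`,
`(indChar H γ) g = |H|⁻¹ * Σ_{x ∈ G} γ°(x g x⁻¹)`, where `γ°` extends `γ` by zero. -/
noncomputable def indChar {G : Type*} [Group G] (H : Subgroup G) (γ : H → ℂ) : G → ℂ :=
  fun g => (Nat.card H : ℂ)⁻¹ *
    ∑ᶠ x : G, if h : x * g * x⁻¹ ∈ H then γ ⟨x * g * x⁻¹, h⟩ else 0

/-- `χ : G → ℂ` is the character of some nonzero finite-dimensional complex representation. -/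
def IsChar (G : Type*) [Group G] (χ : G → ℂ) : Prop :=
  ∃ (V : Type) (_ : AddCommGroup V) (_ : Module ℂ V) (_ : FiniteDimensional ℂ V)
    (ρ : Representation ℂ G V), Nontrivial V ∧ ∀ g, χ g = LinearMap.trace ℂ V (ρ g)

/-- `χ : G → ℂ` is the character of an irreducible finite-dimensional complex representation. -/
def IsIrrChar (G : Type*) [Group G] (χ : G → ℂ) : Prop :=
  ∃ (V : Type) (_ : AddCommGroup V) (_ : Module ℂ V) (_ : FiniteDimensional ℂ V)
    (ρ : Representation ℂ G V),
    IsSimpleModule (MonoidAlgebra ℂ G) ρ.asModule ∧ ∀ g, χ g = LinearMap.trace ℂ V (ρ g)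

/-- The usual inner product of class functions on a finite group. -/
noncomputable def charInner (G : Type*) [Group G] (φ ψ : G → ℂ) : ℂ :=
  (Nat.card G : ℂ)⁻¹ * ∑ᶠ g : G, φ g * starRingEnd ℂ (ψ g)

set_option maxHeartbeats 2000000 in
/-- Central products and induction: . -/
theorem central_product_induction {E : Type*} [Group E] [Finite E] {n : ℕ} (hn : 1 ≤ n)
    (X : Fin n → Subgroup E) (Z : Subgroup E)
    (hZc : Z ≤ Subgroup.center E) (hZle : ∀ i, Z ≤ X i)
    (hcomm : ∀ i j, i ≠ j → ∀ a ∈ X i, ∀ b ∈ X j, Commute a b)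
    (htop : (⨆ i, X i) = ⊤)
    (hint : ∀ i, (⨆ j ∈ {j | j ≠ i}, X j) ⊓ X i = Z)
    (lam : Z → ℂ) (hlam : IsIrrChar Z lam)
    (K : Fin n → Subgroup E) (hZK : ∀ i, Z ≤ K i) (hKX : ∀ i, K i ≤ X i)
    (Ksub : Subgroup E) (hKsub : Ksub = ⨆ i, K i)
    (γ : (i : Fin n) → ((K i) → ℂ)) (hγ : ∀ i, IsIrrChar (K i) (γ i))
    (hγover : ∀ i (z : E) (hz : z ∈ Z), γ i ⟨z, hZK i hz⟩ = γ i 1 * lam ⟨z, hz⟩)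
    (δ : Ksub → ℂ)
    (hδ : ∀ (k : Fin n → E) (hk : ∀ i, k i ∈ K i) (hmem : (List.ofFn k).prod ∈ Ksub),
      δ ⟨(List.ofFn k).prod, hmem⟩ = ∏ i, γ i ⟨k i, hk i⟩) :
    ∀ (x : Fin n → E) (hx : ∀ i, x i ∈ X i),
      indChar Ksub δ (List.ofFn x).prod =
        ∏ i, indChar ((K i).subgroupOf (X i))
          (fun k => γ i ⟨((k : (X i)) : E), Subgroup.mem_subgroupOf.mp k.2⟩)
          ⟨x i, hx i⟩ := by

  classical
  intro x hx
  letI : Fintype E := Fintype.ofFinite E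
  letI : ∀ i : Fin n, Fintype (X i) := fun i => Fintype.ofFinite _
  letI : ∀ i : Fin n, Fintype (K i) := fun i => Fintype.ofFinite _
  have hcommK : ∀ i j, i ≠ j → ∀ a ∈ K i, ∀ b ∈ K j, Commute a b :=
    fun i j hij a ha b hb => hcomm i j hij a (hKX i ha) b (hKX j hb)
  set φ := piProdHom X hcomm with hφdef
  set ψ := piProdHom K hcommK with hψdef
  have hφsurj : Function.Surjective φ := by
    rw [← MonoidHom.range_eq_top, eq_top_iff, ← htop]
    exact iSup_le fun i v hv => ⟨_, piProdHom_single X hcomm i v hv⟩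
  have hψr : ψ.range = Ksub := by
    rw [hKsub]
    apply le_antisymm
    · rintro v ⟨k, rfl⟩
      exact piProdHom_mem K hcommK _ k
        (fun i => Subgroup.mem_iSup_of_mem i (k i).2)
    · exact iSup_le fun i v hv => ⟨_, piProdHom_single K hcommK i v hv⟩
  -- kernel components lie in Z
  have memZ : ∀ c : (i : Fin n) → X i, φ c = 1 → ∀ i, ((c i : X i) : E) ∈ Z := by
    intro c hc i
    set u : (j : Fin n) → X j :=
      (fun j => if h : i = j then ⟨((c i : X i) : E), h ▸ (c i).2⟩ else 1) with hu
    have hui : u i = c i := dif_pos rfl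
    have hv : φ c = ((c i : X i) : E) * φ (u⁻¹ * c) := by
      conv_lhs => rw [← mul_inv_cancel_left u c]
      rw [map_mul]
      congr 1
      exact piProdHom_single X hcomm i ((c i : X i) : E) (c i).2
    have hsup : φ (u⁻¹ * c) ∈ ⨆ j ∈ {j | j ≠ i}, X j := by
      apply piProdHom_mem
      intro j
      by_cases h : i = j
      · subst h
        have h1 : (u⁻¹ * c) i = 1 := by
          show (u i)⁻¹ * c i = 1
          rw [hui, inv_mul_cancel]
        rw [h1]
        exact one_mem _
      · apply Subgroup.mem_iSup_of_mem j
        apply Subgroup.mem_iSup_of_mem (Ne.symm h)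
        exact ((u⁻¹ * c) j).2
    have h2 : ((c i : X i) : E) ∈ (⨆ j ∈ {j | j ≠ i}, X j) ⊓ X i := by
      constructor
      · have h3 : ((c i : X i) : E) = (φ (u⁻¹ * c))⁻¹ := by
          rw [hc] at hv
          rw [eq_inv_iff_mul_eq_one, ← hv]
        rw [h3]
        exact (⨆ j ∈ {j | j ≠ i}, X j).inv_mem hsup
      · exact (c i).2
    rw [hint i] at h2
    exact h2
  -- components of elements of Ksub lie in K
  have memK : ∀ c : (i : Fin n) → X i, φ c ∈ Ksub → ∀ i, ((c i : X i) : E) ∈ K i := by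
    intro c hcm i
    rw [← hψr] at hcm
    obtain ⟨k, hk⟩ := hcm
    set k' : (j : Fin n) → X j := (fun j => ⟨((k j : K j) : E), hKX j (k j).2⟩) with hk'def
    have hk' : φ k' = ψ k := rfl
    have h1 : φ (c * k'⁻¹) = 1 := by
      rw [map_mul, map_inv, hk', hk, mul_inv_cancel]
    have h2 := memZ (c * k'⁻¹) h1 i
    have h3 : ((c i : X i) : E) = (((c * k'⁻¹) i : X i) : E) * ((k i : K i) : E) := by
      show ((c i : X i) : E)
        = ((c i : X i) : E) * (((k i : K i) : E))⁻¹ * ((k i : K i) : E)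
      rw [inv_mul_cancel_right]
    rw [h3]
    exact mul_mem (hZK i h2) (k i).2
  -- kernels have the same size
  have hkercard : Nat.card ψ.ker = Nat.card φ.ker := by
    apply Nat.card_eq_of_bijective
      (fun k : ψ.ker => (⟨fun j => ⟨((k.1 j : K j) : E), hKX j (k.1 j).2⟩,
        MonoidHom.mem_ker.mpr
          ((rfl : φ (fun j => (⟨((k.1 j : K j) : E), hKX j (k.1 j).2⟩ : X j)) = ψ k.1).trans
            (MonoidHom.mem_ker.mp k.2))⟩ : φ.ker))
    constructor
    · intro p q hpq
      apply Subtype.ext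
      funext j
      apply Subtype.ext
      exact congrArg (fun r : φ.ker => ((r.1 j : X j) : E)) hpq
    · intro c
      have hcomp := memZ c.1 (MonoidHom.mem_ker.mp c.2)
      refine ⟨⟨fun j => ⟨((c.1 j : X j) : E), (hZK j) (hcomp j)⟩,
        MonoidHom.mem_ker.mpr
          ((rfl : ψ (fun j => (⟨((c.1 j : X j) : E), (hZK j) (hcomp j)⟩ : K j)) = φ c.1).trans
            (MonoidHom.mem_ker.mp c.2))⟩, ?_⟩
      apply Subtype.ext
      funext j
      apply Subtype.ext
      rfl
  -- cardinality identity
  have hcard : (∏ i, (Nat.card (K i) : ℂ)) = (Nat.card φ.ker : ℂ) * (Nat.card Ksub : ℂ) := by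
    have h1 : Nat.card ((i : Fin n) → K i) = ∏ i, Nat.card (K i) := Nat.card_pi
    have h2 : Nat.card ((i : Fin n) → K i) = Nat.card (((i : Fin n) → K i) ⧸ ψ.ker) * Nat.card ψ.ker :=
      Subgroup.card_eq_card_quotient_mul_card_subgroup ψ.ker
    have h3 : Nat.card (((i : Fin n) → K i) ⧸ ψ.ker) = Nat.card ψ.range :=
      Nat.card_congr (QuotientGroup.quotientKerEquivRange ψ).toEquiv
    rw [hψr] at h3
    rw [← Nat.cast_prod, ← h1, h2, h3, hkercard]
    push_cast
    ring
  -- the summand functions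
  set S : (i : Fin n) → (X i) → ℂ := fun i u =>
    if h : (u : E) * x i * (u : E)⁻¹ ∈ K i then γ i ⟨(u : E) * x i * (u : E)⁻¹, h⟩ else 0
    with hS
  set T : E → ℂ := fun w =>
    if h : w * (List.ofFn x).prod * w⁻¹ ∈ Ksub then δ ⟨w * (List.ofFn x).prod * w⁻¹, h⟩ else 0
    with hT
  have hg : φ (fun i => (⟨x i, hx i⟩ : X i)) = (List.ofFn x).prod := rfl
  -- key pointwise identity
  have key2 : ∀ y : (i : Fin n) → X i, T (φ y) = ∏ i, S i (y i) := by
    intro y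
    set c : (i : Fin n) → X i := fun i => ⟨((y i : X i) : E) * x i * ((y i : X i) : E)⁻¹,
      mul_mem (mul_mem (y i).2 (hx i)) ((X i).inv_mem (y i).2)⟩ with hcdef
    have hconj : φ y * (List.ofFn x).prod * (φ y)⁻¹ = φ c := by
      rw [← hg, ← map_inv, ← map_mul, ← map_mul]
      congr 1
    by_cases hm : ∀ i, ((y i : X i) : E) * x i * ((y i : X i) : E)⁻¹ ∈ K i
    · have hmem : φ y * (List.ofFn x).prod * (φ y)⁻¹ ∈ Ksub := by
        rw [hconj, hKsub]
        exact piProdHom_mem X hcomm _ c (fun i => Subgroup.mem_iSup_of_mem i (hm i))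
      have hm2 : (List.ofFn fun i => ((y i : X i) : E) * x i * ((y i : X i) : E)⁻¹).prod
          ∈ Ksub := by
        have h5 : φ c ∈ Ksub := hconj ▸ hmem
        exact h5
      have harg : (⟨φ y * (List.ofFn x).prod * (φ y)⁻¹, hmem⟩ : Ksub) =
          ⟨(List.ofFn fun i => ((y i : X i) : E) * x i * ((y i : X i) : E)⁻¹).prod, hm2⟩ :=
        Subtype.ext hconj
      simp only [hT]
      rw [dif_pos hmem, harg, hδ _ hm hm2]
      apply Finset.prod_congr rfl
      intro i _
      simp only [hS]
      rw [dif_pos (hm i)]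
    · push_neg at hm
      obtain ⟨i, hi⟩ := hm
      have hnot : ¬ (φ y * (List.ofFn x).prod * (φ y)⁻¹ ∈ Ksub) := by
        intro hmem
        exact hi (memK c (by rw [← hconj]; exact hmem) i)
      simp only [hT]
      rw [dif_neg hnot]
      symm
      apply Finset.prod_eq_zero (Finset.mem_univ i)
      simp only [hS]
      rw [dif_neg hi]
  have key1 : ∑ y : ((i : Fin n) → X i), T (φ y) = (Nat.card φ.ker : ℂ) * ∑ w : E, T w :=
    sum_comp_eq_card_ker_mul φ hφsurj T
  have key3 : ∑ y : ((i : Fin n) → X i), ∏ i, S i (y i) = ∏ i, ∑ u : X i, S i u := by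
    rw [Finset.prod_univ_sum, Fintype.piFinset_univ]
  have key4 : ∀ i, indChar ((K i).subgroupOf (X i))
      (fun k => γ i ⟨((k : (X i)) : E), Subgroup.mem_subgroupOf.mp k.2⟩) ⟨x i, hx i⟩
      = (Nat.card (K i) : ℂ)⁻¹ * ∑ u : X i, S i u := by
    intro i
    unfold indChar
    rw [finsum_eq_sum_of_fintype]
    rw [show Nat.card ((K i).subgroupOf (X i)) = Nat.card (K i) from
      Nat.card_congr (Subgroup.subgroupOfEquivOfLe (hKX i)).toEquiv]
    congr 1
  -- assemble
  have stepL : indChar Ksub δ (List.ofFn x).prod = (Nat.card Ksub : ℂ)⁻¹ * ∑ w : E, T w := by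
    unfold indChar
    rw [finsum_eq_sum_of_fintype]
  rw [stepL, Finset.prod_congr rfl (fun i _ => key4 i)]
  have hsum : (Nat.card φ.ker : ℂ) * ∑ w : E, T w = ∏ i, ∑ u : X i, S i u := by
    rw [← key1, ← key3]
    exact Finset.sum_congr rfl (fun y _ => key2 y)
  rw [Finset.prod_mul_distrib, Finset.prod_inv_distrib, ← hsum, hcard]
  have h0 : (Nat.card φ.ker : ℂ) ≠ 0 :=
    Nat.cast_ne_zero.mpr Nat.card_pos.ne'
  have h0' : (Nat.card Ksub : ℂ) ≠ 0 :=
    Nat.cast_ne_zero.mpr Nat.card_pos.ne'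
  rw [mul_inv_rev, mul_assoc, inv_mul_cancel_left₀ h0]
end

section
/- Let G be a finite group, g ∈ G, D a positive integer, and suppose there exist α ∈ ℂ and a Galois conjugate α* of α such that χ(g) ∈ {α, α*} for every χ ∈ Irr(G) of degree D. Suppose γ is a character of a subgroup H of G such that γ^G is a sum of irreducible characters all of degree D, and γ^G(g) = 0. Then α + α* = 0. -/
open scoped BigOperators

section Twist

/-- Type synonym twisting the `ℂ`-module structure by a ring automorphism. -/
@[nolint unusedArguments]
def TwV (_ : ℂ ≃+* ℂ) (V : Type) : Type := V

variable (σ : ℂ ≃+* ℂ) {V : Type} [AddCommGroup V] [Module ℂ V]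

instance : AddCommGroup (TwV σ V) := inferInstanceAs (AddCommGroup V)
noncomputable instance : Module ℂ (TwV σ V) := Module.compHom V (σ.symm : ℂ →+* ℂ)

theorem TwV.smul_def (c : ℂ) (v : TwV σ V) :
    c • v = (show TwV σ V from σ.symm c • (show V from v)) := rfl

/-- A linear map on `V` is also linear for the twisted structure. -/
noncomputable def twLin (f : V →ₗ[ℂ] V) : TwV σ V →ₗ[ℂ] TwV σ V where
  toFun v := show TwV σ V from f (show V from v)
  map_add' a b := f.map_add a b
  map_smul' c v := f.map_smul (σ.symm c) v

@[simp] theorem twLin_apply (f : V →ₗ[ℂ] V) (v : TwV σ V) :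
    twLin σ f v = (show TwV σ V from f (show V from v)) := rfl

/-- A basis for the twisted module. -/
noncomputable def twBasis {ι : Type*} (b : Module.Basis ι ℂ V) : Module.Basis ι ℂ (TwV σ V) :=
  Module.Basis.ofRepr
    { toFun := fun v => (b.repr (show V from v)).mapRange σ σ.map_zero
      invFun := fun f => show TwV σ V from b.repr.symm (f.mapRange σ.symm σ.symm.map_zero)
      left_inv := fun v => by
        have h : Finsupp.mapRange σ.symm σ.symm.map_zero
            ((b.repr (show V from v)).mapRange σ σ.map_zero) = b.repr (show V from v) := by
          ext i; simp
        show (show TwV σ V from b.repr.symm _) = v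
        rw [h, b.repr.symm_apply_apply]
      right_inv := fun f => by
        show (b.repr (b.repr.symm _)).mapRange σ σ.map_zero = f
        rw [b.repr.apply_symm_apply]
        ext i; simp
      map_add' := fun a b' => by ext i; erw [b.repr.map_add]; simp
      map_smul' := fun c v => by
        ext i
        show σ ((b.repr (σ.symm c • (show V from v))) i) = _
        erw [b.repr.map_smul]
        simp [Finsupp.mapRange_apply, map_mul] }

theorem twBasis_apply {ι : Type*} (b : Module.Basis ι ℂ V) (i : ι) :
    twBasis σ b i = (show TwV σ V from b i) := by
  classical
  show (twBasis σ b).repr.symm (Finsupp.single i 1) = _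
  show (show TwV σ V from b.repr.symm
      ((Finsupp.single i (1:ℂ)).mapRange σ.symm σ.symm.map_zero)) = _
  rw [Finsupp.mapRange_single, map_one]
  exact b.repr_symm_single_one i

noncomputable instance (σ : ℂ ≃+* ℂ) (V : Type) [AddCommGroup V] [Module ℂ V]
    [FiniteDimensional ℂ V] : FiniteDimensional ℂ (TwV σ V) :=
  Module.Finite.of_basis (twBasis σ (Module.finBasis ℂ V))

theorem trace_twLin [FiniteDimensional ℂ V] (f : V →ₗ[ℂ] V) :
    LinearMap.trace ℂ (TwV σ V) (twLin σ f) = σ (LinearMap.trace ℂ V f) := by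
  classical
  set b := Module.finBasis ℂ V with hb
  rw [LinearMap.trace_eq_matrix_trace ℂ b f,
    LinearMap.trace_eq_matrix_trace ℂ (twBasis σ b) (twLin σ f)]
  rw [Matrix.trace, Matrix.trace, map_sum]
  apply Finset.sum_congr rfl
  intro i _
  rw [Matrix.diag_apply, Matrix.diag_apply, LinearMap.toMatrix_apply, LinearMap.toMatrix_apply,
    twBasis_apply]
  show ((twBasis σ b).repr (show TwV σ V from f (b i))) i = _
  show ((b.repr (f (b i))).mapRange σ σ.map_zero) i = _
  simp [Finsupp.mapRange_apply]

variable {G : Type*} [Group G]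

/-- The twisted representation. -/
noncomputable def twRep (ρ : Representation ℂ G V) : Representation ℂ G (TwV σ V) where
  toFun g := twLin σ (ρ g)
  map_one' := by
    refine LinearMap.ext fun v => ?_
    show ρ 1 (show V from v) = (show V from v)
    simp
    rfl
  map_mul' g h := by
    refine LinearMap.ext fun v => ?_
    show ρ (g * h) (show V from v) = ρ g (ρ h (show V from v))
    simp
    rfl

noncomputable def maMap {G : Type*} (σ : ℂ ≃+* ℂ) (a : MonoidAlgebra ℂ G) : MonoidAlgebra ℂ G :=
  MonoidAlgebra.ofCoeff (Finsupp.mapRange σ σ.map_zero a.coeff)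

theorem maMap_symm_maMap {G : Type*} (σ : ℂ ≃+* ℂ) (a : MonoidAlgebra ℂ G) :
    maMap σ.symm (maMap σ a) = a := by
  ext t; simp [maMap, MonoidAlgebra.coeff_ofCoeff]

/-- The identity, as a map from the twisted module to the original one. -/
def twAsOld (ρ : Representation ℂ G V) : (twRep σ ρ).asModule → ρ.asModule := fun x => x

/-- The identity, as a map from the original module to the twisted one. -/
def oldAsTw (ρ : Representation ℂ G V) : ρ.asModule → (twRep σ ρ).asModule := fun x => x

theorem twRep_asModule_smul (ρ : Representation ℂ G V) (a : MonoidAlgebra ℂ G)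
    (x : (twRep σ ρ).asModule) :
    twAsOld σ ρ (a • x) = maMap σ.symm a • twAsOld σ ρ x := by
  show (twRep σ ρ).asAlgebraHom a (show V from x) =
    ρ.asAlgebraHom (MonoidAlgebra.ofCoeff (Finsupp.mapRange σ.symm σ.symm.map_zero a.coeff)) (show V from x)
  induction a using MonoidAlgebra.induction with
  | zero => simp; rfl
  | single_add s c a hs hc ih =>
    have hadd : MonoidAlgebra.ofCoeff (Finsupp.mapRange σ.symm σ.symm.map_zero (MonoidAlgebra.single s c + a).coeff) =
        MonoidAlgebra.single s (σ.symm c) + MonoidAlgebra.ofCoeff (Finsupp.mapRange σ.symm σ.symm.map_zero a.coeff) := by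
      rw [MonoidAlgebra.coeff_add, MonoidAlgebra.coeff_single,
        Finsupp.mapRange_add (fun x y => map_add σ.symm x y), Finsupp.mapRange_single]
      rfl
    rw [hadd, map_add, map_add]
    erw [LinearMap.add_apply]
    rw [ih]
    congr 1
    rw [Representation.asAlgebraHom_single, Representation.asAlgebraHom_single]
    erw [LinearMap.smul_apply]

theorem old_smul_as_tw (ρ : Representation ℂ G V) (a : MonoidAlgebra ℂ G) (x : ρ.asModule) :
    oldAsTw σ ρ (a • x) = maMap σ a • oldAsTw σ ρ x := by
  have h := twRep_asModule_smul σ ρ (maMap σ a) (oldAsTw σ ρ x)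
  rw [maMap_symm_maMap] at h
  exact congrArg (oldAsTw σ ρ) h.symm

noncomputable def twSubOrderIso (ρ : Representation ℂ G V) :
    Submodule (MonoidAlgebra ℂ G) ((twRep σ ρ).asModule) ≃o
      Submodule (MonoidAlgebra ℂ G) ρ.asModule where
  toFun q :=
    { carrier := {x : ρ.asModule | oldAsTw σ ρ x ∈ q}
      add_mem' := fun ha hb => q.add_mem ha hb
      zero_mem' := q.zero_mem
      smul_mem' := fun a x hx => by
        show oldAsTw σ ρ (a • x) ∈ q
        rw [old_smul_as_tw]
        exact q.smul_mem _ hx }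
  invFun p :=
    { carrier := {x : (twRep σ ρ).asModule | twAsOld σ ρ x ∈ p}
      add_mem' := fun ha hb => p.add_mem ha hb
      zero_mem' := p.zero_mem
      smul_mem' := fun a x hx => by
        show twAsOld σ ρ (a • x) ∈ p
        rw [twRep_asModule_smul]
        exact p.smul_mem _ hx }
  left_inv q := SetLike.ext fun x => Iff.rfl
  right_inv p := SetLike.ext fun x => Iff.rfl
  map_rel_iff' := ⟨fun h x hx => h hx, fun h x hx => h hx⟩

end Twist

theorem IsIrrChar.comp_ringEquiv {G : Type*} [Group G] (σ : ℂ ≃+* ℂ) {χ : G → ℂ}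
    (h : IsIrrChar G χ) : IsIrrChar G fun g => σ (χ g) := by
  obtain ⟨V, _, _, _, ρ, hsimple, hχ⟩ := h
  refine ⟨TwV σ V, inferInstance, inferInstance, inferInstance, twRep σ ρ,
    (isSimpleModule_iff _ _).mpr (twSubOrderIso σ ρ).isSimpleOrder, fun g => ?_⟩
  show σ (χ g) = _
  rw [hχ g]
  exact (trace_twLin σ (ρ g)).symm

theorem galois_pair_sum_zero {G : Type*} [Group G] [Finite G] (H : Subgroup G) (g : G)
    (D : ℕ) (hD : 0 < D) (α αs : ℂ) (hGal : ∃ σ : ℂ ≃ₐ[ℚ] ℂ, σ α = αs)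
    (hvals : ∀ χ : G → ℂ, IsIrrChar G χ → χ 1 = (D : ℂ) → χ g = α ∨ χ g = αs)
    (γ : H → ℂ) (hγ : IsChar H γ)
    (hdecomp : ∃ (k : ℕ) (χs : Fin k → (G → ℂ)), 1 ≤ k ∧ (∀ i, IsIrrChar G (χs i)) ∧
      (∀ i, χs i 1 = (D : ℂ)) ∧ indChar H γ = ∑ i, χs i)
    (h0 : indChar H γ g = 0) :
    α + αs = 0 := by
  obtain ⟨σ, hσ⟩ := hGal
  obtain ⟨k, χs, hk, hirr, hdeg, hsum⟩ := hdecomp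
  have hk0 : (k : ℂ) ≠ 0 := Nat.cast_ne_zero.mpr (by omega)
  have hsum0 : ∑ i, χs i g = 0 := by
    have h1 := congrFun hsum g
    rw [h0] at h1
    rw [Finset.sum_apply] at h1
    exact h1.symm
  have hval : ∀ i, χs i g = α ∨ χs i g = αs := fun i => hvals _ (hirr i) (hdeg i)
  have hσval : ∀ i, σ (χs i g) = α ∨ σ (χs i g) = αs := by
    intro i
    refine hvals _ (IsIrrChar.comp_ringEquiv σ.toRingEquiv (hirr i)) ?_
    show σ (χs i 1) = (D : ℂ)
    rw [hdeg i, map_natCast]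
  have hσsum0 : ∑ i, σ (χs i g) = 0 := by
    rw [← map_sum, hsum0, map_zero]
  by_cases hall : ∀ i, χs i g = α
  · have hα : α = 0 := by
      have : ∑ i : Fin k, χs i g = (k : ℂ) * α := by
        rw [Finset.sum_congr rfl fun i _ => hall i]
        simp [Finset.sum_const, nsmul_eq_mul]
      rw [hsum0] at this
      exact (mul_eq_zero.mp this.symm).resolve_left hk0
    have : αs = 0 := by rw [← hσ, hα, map_zero]
    rw [hα, this, add_zero]
  · push_neg at hall
    obtain ⟨i0, hi0⟩ := hall
    have hi0' : χs i0 g = αs := (hval i0).resolve_left hi0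
    have hσαs : σ αs = α ∨ σ αs = αs := by
      have := hσval i0
      rwa [hi0'] at this
    rcases hσαs with hc | hc
    · -- each χs i g + σ (χs i g) = α + αs
      have hterm : ∀ i, χs i g + σ (χs i g) = α + αs := by
        intro i
        rcases hval i with h | h
        · rw [h, hσ]
        · rw [h, hc, add_comm]
      have : (k : ℂ) * (α + αs) = 0 := by
        have h2 := Finset.sum_congr rfl fun i (_ : i ∈ Finset.univ) => hterm i
        rw [Finset.sum_add_distrib, hsum0, hσsum0, add_zero] at h2
        rw [Finset.sum_const, Finset.card_univ, Fintype.card_fin, nsmul_eq_mul] at h2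
        exact h2.symm
      exact (mul_eq_zero.mp this).resolve_left hk0
    · -- σ fixes αs, so σ of every value is αs
      have hterm : ∀ i, σ (χs i g) = αs := by
        intro i
        rcases hval i with h | h
        · rw [h, hσ]
        · rw [h, hc]
      have hαs : αs = 0 := by
        have : ∑ i : Fin k, σ (χs i g) = (k : ℂ) * αs := by
          rw [Finset.sum_congr rfl fun i _ => hterm i]
          simp [Finset.sum_const, nsmul_eq_mul]
        rw [hσsum0] at this
        exact (mul_eq_zero.mp this.symm).resolve_left hk0
      have hα : α = 0 := by
        apply σ.injective
        rw [hσ, hαs, map_zero]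
      rw [hα, hαs, add_zero]
end
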